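/- Let G be a directed bipartite graph with vertex bipartition V = C ⊔ R and edge set E ⊆ C × R (each edge has head in C and tail in R), with transfer matrices H, T ∈ {0,1}^{E×V}. Let r ∈ ℝ_{≥0}^R and c ∈ ℝ_{≥0}^C be vertex weightings, and let f ∈ ℝ_{≥0}^E be a nonnegative flow satisfying ‖diag(c)† Hᵀ f‖_∞ ≤ η and ‖diag(r)† Tᵀ f‖_∞ ≤ η for some η ≥ 0. Then, with F = diag(f), ‖diag(r)^{†/2} Tᵀ F H diag(c)^{†/2}‖ ≤ η in spectral norm. -/

import Mathlib

open Matrix BigOperators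

noncomputable section

/-- The 0/1 indicator matrix of a map from (edge) indices to vertices:
row `e` is the indicator of the vertex `f e`. -/
def indMat {E V : Type*} [DecidableEq V] (f : E → V) : Matrix E V ℝ :=
  Matrix.of fun e v => if f e = v then (1 : ℝ) else 0

/-- The edge–vertex transfer matrix `B = H - T` of a directed graph with head map `hd`
and tail map `tl`. -/
def transMat {E V : Type*} [DecidableEq V] (hd tl : E → V) : Matrix E V ℝ :=
  indMat hd - indMat tl

/-- The directed Laplacian `Bᵀ W H`. -/
def dirLap {E V : Type*} [Fintype E] [DecidableEq E] [DecidableEq V]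
    (hd tl : E → V) (w : E → ℝ) : Matrix V V ℝ :=
  (transMat hd tl)ᵀ * Matrix.diagonal w * indMat hd

/-- The undirected Laplacian `Bᵀ W B` of the corresponding undirected graph. -/
def undLap {E V : Type*} [Fintype E] [DecidableEq E] [DecidableEq V]
    (hd tl : E → V) (w : E → ℝ) : Matrix V V ℝ :=
  (transMat hd tl)ᵀ * Matrix.diagonal w * transMat hd tl

/-- The corresponding undirected (simple) graph of a weighted directed graph:
`u ~ v` iff `u ≠ v` and some edge of positive weight joins them (in either direction). -/
def undSG {E V : Type*} (hd tl : E → V) (w : E → ℝ) : SimpleGraph V :=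
  SimpleGraph.fromRel (fun u v => ∃ e, 0 < w e ∧ hd e = u ∧ tl e = v)

/-- Directed Laplacian for a graph whose edges are indexed by pairs of vertices. -/
def dirLapP {V : Type*} [Fintype V] [DecidableEq V] (w : V × V → ℝ) : Matrix V V ℝ :=
  dirLap Prod.fst Prod.snd w

/-- Undirected Laplacian for a graph whose edges are indexed by pairs of vertices. -/
def undLapP {V : Type*} [Fintype V] [DecidableEq V] (w : V × V → ℝ) : Matrix V V ℝ :=
  undLap Prod.fst Prod.snd w

/-- Corresponding undirected graph for edges indexed by pairs of vertices. -/
def undSGP {V : Type*} (w : V × V → ℝ) : SimpleGraph V :=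
  undSG Prod.fst Prod.snd w

/-- `B` is a Moore–Penrose pseudoinverse of `A`. -/
def IsMPInv {V : Type*} [Fintype V] (A B : Matrix V V ℝ) : Prop :=
  A * B * A = A ∧ B * A * B = B ∧ (A * B)ᵀ = A * B ∧ (B * A)ᵀ = B * A

open Classical in
/-- The Moore–Penrose pseudoinverse of a (square, real) matrix. -/
noncomputable def mpinv {V : Type*} [Fintype V] (A : Matrix V V ℝ) : Matrix V V ℝ :=
  if h : ∃ B, IsMPInv A B then h.choose else 0

open Classical in
/-- The PSD square root of a positive semidefinite matrix (junk value `0` otherwise). -/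
noncomputable def psdSqrt {V : Type*} [Fintype V] [DecidableEq V] (A : Matrix V V ℝ) :
    Matrix V V ℝ :=
  if h : A.PosSemidef then
    (h.1.eigenvectorUnitary : Matrix V V ℝ) * diagonal ((↑) ∘ Real.sqrt ∘ h.1.eigenvalues) *
      (star h.1.eigenvectorUnitary : Matrix V V ℝ)
  else 0

/-- `A^{†/2} = (A†)^{1/2} = (A^{1/2})†` for a PSD matrix `A`. -/
noncomputable def pinvSqrt {V : Type*} [Fintype V] [DecidableEq V] (A : Matrix V V ℝ) :
    Matrix V V ℝ :=
  mpinv (psdSqrt A)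

/-- The ℓ₂→ℓ₂ (spectral) operator norm of `A` is at most `c`. -/
def l2OpNormLE {m n : Type*} [Fintype m] [Fintype n] (A : Matrix m n ℝ) (c : ℝ) : Prop :=
  ∀ (x : m → ℝ) (y : n → ℝ),
    |x ⬝ᵥ A.mulVec y| ≤ c * Real.sqrt (∑ i, x i ^ 2) * Real.sqrt (∑ j, y j ^ 2)

/-- `|xᵀ A y| ≤ ε √((xᵀ L x)(yᵀ L y))` for all vectors `x, y`. -/
def bilinApprox {V : Type*} [Fintype V] (A L : Matrix V V ℝ) (ε : ℝ) : Prop :=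
  ∀ x y : V → ℝ,
    |x ⬝ᵥ A.mulVec y| ≤ ε * Real.sqrt ((x ⬝ᵥ L.mulVec x) * (y ⬝ᵥ L.mulVec y))

/-- Schur complement of a `(V ⊕ X) × (V ⊕ X)` matrix onto the `V`-block. -/
def schurInl {V X : Type*} [Fintype V] [Fintype X] (A : Matrix (V ⊕ X) (V ⊕ X) ℝ) :
    Matrix V V ℝ :=
  A.submatrix Sum.inl Sum.inl -
    A.submatrix Sum.inl Sum.inr * mpinv (A.submatrix Sum.inr Sum.inr) *
      A.submatrix Sum.inr Sum.inl


/-! ### Auxiliary lemmas -/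

theorem aux_mpinv_unique {V : Type*} [Fintype V] {A B B' : Matrix V V ℝ}
    (h1 : IsMPInv A B) (h2 : IsMPInv A B') : B = B' := by
  obtain ⟨h1a, h1b, h1c, h1d⟩ := h1
  obtain ⟨h2a, h2b, h2c, h2d⟩ := h2
  have hAB : A * B = A * B' := by
    calc A * B = (A * B)ᵀ := h1c.symm
    _ = ((A * B' * A) * B)ᵀ := by rw [h2a]
    _ = ((A * B') * (A * B))ᵀ := by noncomm_ring
    _ = (A * B)ᵀ * (A * B')ᵀ := by rw [Matrix.transpose_mul]
    _ = (A * B) * (A * B') := by rw [h1c, h2c]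
    _ = (A * B * A) * B' := by noncomm_ring
    _ = A * B' := by rw [h1a]
  have hBA : B * A = B' * A := by
    calc B * A = (B * A)ᵀ := h1d.symm
    _ = (B * (A * B' * A))ᵀ := by rw [h2a]
    _ = ((B * A) * (B' * A))ᵀ := by noncomm_ring
    _ = (B' * A)ᵀ * (B * A)ᵀ := by rw [Matrix.transpose_mul]
    _ = (B' * A) * (B * A) := by rw [h1d, h2d]
    _ = B' * (A * B * A) := by noncomm_ring
    _ = B' * A := by rw [h1a]
  calc B = B * A * B := h1b.symm
  _ = B * (A * B') := by rw [mul_assoc, hAB]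
  _ = (B' * A) * B' := by rw [← mul_assoc, hBA]
  _ = B' := h2b

theorem aux_mpinv_eq {V : Type*} [Fintype V] {A B : Matrix V V ℝ} (h : IsMPInv A B) :
    mpinv A = B := by
  rw [mpinv, dif_pos ⟨B, h⟩]
  exact aux_mpinv_unique (Exists.choose_spec (⟨B, h⟩ : ∃ B, IsMPInv A B)) h

theorem aux_isMPInv_diagonal {V : Type*} [Fintype V] [DecidableEq V] (d : V → ℝ) :
    IsMPInv (Matrix.diagonal d) (Matrix.diagonal fun i => (d i)⁻¹) := by
  refine ⟨?_, ?_, ?_, ?_⟩ <;>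
    simp only [Matrix.diagonal_mul_diagonal, Matrix.diagonal_transpose] <;>
    ext i j <;> rcases eq_or_ne i j with rfl | hne
  · simp only [Matrix.diagonal_apply_eq]
    rcases eq_or_ne (d i) 0 with h | h <;> field_simp
  · simp [Matrix.diagonal_apply_ne _ hne]
  · simp only [Matrix.diagonal_apply_eq]
    rcases eq_or_ne (d i) 0 with h | h <;> field_simp
  · simp [Matrix.diagonal_apply_ne _ hne]

theorem aux_mpinv_diagonal {V : Type*} [Fintype V] [DecidableEq V] (d : V → ℝ) :
    mpinv (Matrix.diagonal d) = Matrix.diagonal fun i => (d i)⁻¹ :=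
  aux_mpinv_eq (aux_isMPInv_diagonal d)

theorem aux_psdSqrt_diagonal {V : Type*} [Fintype V] [DecidableEq V] {d : V → ℝ}
    (hd : ∀ i, 0 ≤ d i) :
    psdSqrt (Matrix.diagonal d) = Matrix.diagonal fun i => Real.sqrt (d i) := by
  have hP : (Matrix.diagonal d).PosSemidef := Matrix.posSemidef_diagonal_iff.mpr hd
  have hQ : (Matrix.diagonal fun i => Real.sqrt (d i)).PosSemidef :=
    Matrix.posSemidef_diagonal_iff.mpr fun i => Real.sqrt_nonneg _
  have hsq : (Matrix.diagonal fun i => Real.sqrt (d i)) ^ 2 = Matrix.diagonal d := by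
    rw [pow_two, Matrix.diagonal_mul_diagonal]
    ext i j
    rcases eq_or_ne i j with rfl | hne
    · simp only [Matrix.diagonal_apply_eq, Pi.mul_apply]
      exact Real.mul_self_sqrt (hd i)
    · simp [Matrix.diagonal_apply_ne _ hne]
  rw [psdSqrt, dif_pos hP]
  open MatrixOrder in
  have e : (hP.1.eigenvectorUnitary : Matrix V V ℝ) *
      diagonal ((↑) ∘ Real.sqrt ∘ hP.1.eigenvalues) *
      (star hP.1.eigenvectorUnitary : Matrix V V ℝ) = CFC.sqrt (Matrix.diagonal d) := by
    rw [CFC.sqrt_eq_real_sqrt _ hP.nonneg, cfcₙ_eq_cfc (hf := Real.continuous_sqrt.continuousOn)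
      (hf0 := Real.sqrt_zero), hP.1.cfc_eq, Matrix.IsHermitian.cfc,
      Unitary.conjStarAlgAut_apply]
    rfl
  open MatrixOrder in
  rw [e]
  open MatrixOrder in
  exact CFC.sqrt_unique (by rw [← pow_two]; exact hsq) hQ.nonneg

theorem aux_pinvSqrt_diagonal {V : Type*} [Fintype V] [DecidableEq V] {d : V → ℝ}
    (hd : ∀ i, 0 ≤ d i) :
    pinvSqrt (Matrix.diagonal d) = Matrix.diagonal fun i => (Real.sqrt (d i))⁻¹ := by
  rw [pinvSqrt, aux_psdSqrt_diagonal hd, aux_mpinv_diagonal]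

/-- a flow with small vertex congestion on a bipartite graph induces a matrix
with small spectral norm after degree normalization. -/
theorem stmt_8 {C R : Type*} [Fintype C] [DecidableEq C] [Fintype R] [DecidableEq R]
    (f : C × R → ℝ) (hf : ∀ p, 0 ≤ f p)
    (cv : C → ℝ) (rv : R → ℝ) (hcv : ∀ u, 0 ≤ cv u) (hrv : ∀ v, 0 ≤ rv v)
    (η : ℝ) (hη : 0 ≤ η)
    (hC : ∀ u : C,
        |(mpinv (Matrix.diagonal cv)).mulVec
            ((indMat (Prod.fst : C × R → C))ᵀ.mulVec f) u| ≤ η)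
    (hR : ∀ v : R,
        |(mpinv (Matrix.diagonal rv)).mulVec
            ((indMat (Prod.snd : C × R → R))ᵀ.mulVec f) v| ≤ η) :
    l2OpNormLE
      (pinvSqrt (Matrix.diagonal rv) *
        ((indMat (Prod.snd : C × R → R))ᵀ * Matrix.diagonal f *
          indMat (Prod.fst : C × R → C)) *
        pinvSqrt (Matrix.diagonal cv)) η := by
  intro x y
  set a : R → ℝ := fun v => (Real.sqrt (rv v))⁻¹ with ha
  set b : C → ℝ := fun u => (Real.sqrt (cv u))⁻¹ with hb
  -- rewrite the pseudoinverse square roots as diagonal matrices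
  rw [aux_pinvSqrt_diagonal hrv, aux_pinvSqrt_diagonal hcv]
  -- entries of the middle matrix
  have hmid : ∀ (v : R) (u : C),
      ((indMat (Prod.snd : C × R → R))ᵀ * Matrix.diagonal f *
        indMat (Prod.fst : C × R → C)) v u = f (u, v) := by
    intro v u
    rw [Matrix.mul_apply]
    simp only [Matrix.mul_diagonal, Matrix.transpose_apply, indMat, Matrix.of_apply]
    rw [Fintype.sum_prod_type]
    simp
  have hMentry : ∀ (v : R) (u : C),
      (Matrix.diagonal a *
        ((indMat (Prod.snd : C × R → R))ᵀ * Matrix.diagonal f *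
          indMat (Prod.fst : C × R → C)) * Matrix.diagonal b) v u
      = a v * f (u, v) * b u := by
    intro v u
    rw [Matrix.mul_diagonal, Matrix.diagonal_mul, hmid]
  -- column/row sums of f
  have hsumC : ∀ u : C, ((indMat (Prod.fst : C × R → C))ᵀ.mulVec f) u
      = ∑ v : R, f (u, v) := by
    intro u
    simp only [Matrix.mulVec, dotProduct, Matrix.transpose_apply, indMat,
      Matrix.of_apply, Fintype.sum_prod_type]
    simp [Finset.sum_ite_eq]
  have hsumR : ∀ v : R, ((indMat (Prod.snd : C × R → R))ᵀ.mulVec f) v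
      = ∑ u : C, f (u, v) := by
    intro v
    simp only [Matrix.mulVec, dotProduct, Matrix.transpose_apply, indMat,
      Matrix.of_apply, Fintype.sum_prod_type]
    simp [Finset.sum_ite_eq]
  -- the congestion bounds, cleaned up
  have hav : ∀ v : R, a v ^ 2 * (∑ u : C, f (u, v)) ≤ η := by
    intro v
    have h := hR v
    rw [aux_mpinv_diagonal] at h
    rw [Matrix.mulVec_diagonal, hsumR] at h
    have ha2 : a v ^ 2 = (rv v)⁻¹ := by
      rw [ha]; simp only [inv_pow]
      rw [Real.sq_sqrt (hrv v)]
    rw [ha2]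
    calc (rv v)⁻¹ * ∑ u : C, f (u, v)
        = |(rv v)⁻¹ * ∑ u : C, f (u, v)| := by
          rw [abs_of_nonneg]
          exact mul_nonneg (inv_nonneg.mpr (hrv v))
            (Finset.sum_nonneg fun u _ => hf (u, v))
      _ ≤ η := h
  have hbu : ∀ u : C, b u ^ 2 * (∑ v : R, f (u, v)) ≤ η := by
    intro u
    have h := hC u
    rw [aux_mpinv_diagonal] at h
    rw [Matrix.mulVec_diagonal, hsumC] at h
    have hb2 : b u ^ 2 = (cv u)⁻¹ := by
      rw [hb]; simp only [inv_pow]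
      rw [Real.sq_sqrt (hcv u)]
    rw [hb2]
    calc (cv u)⁻¹ * ∑ v : R, f (u, v)
        = |(cv u)⁻¹ * ∑ v : R, f (u, v)| := by
          rw [abs_of_nonneg]
          exact mul_nonneg (inv_nonneg.mpr (hcv u))
            (Finset.sum_nonneg fun v _ => hf (u, v))
      _ ≤ η := h
  -- express the bilinear form as a single sum over edges
  set g : C × R → ℝ := fun p => x p.2 * a p.2 * Real.sqrt (f p) with hg
  set h : C × R → ℝ := fun p => Real.sqrt (f p) * b p.1 * y p.1 with hh
  have hform : x ⬝ᵥ (Matrix.diagonal a *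
        ((indMat (Prod.snd : C × R → R))ᵀ * Matrix.diagonal f *
          indMat (Prod.fst : C × R → C)) * Matrix.diagonal b).mulVec y
      = ∑ p : C × R, g p * h p := by
    simp only [dotProduct, Matrix.mulVec, hMentry]
    rw [Fintype.sum_prod_type]
    rw [Finset.sum_comm]
    congr 1; funext v
    rw [Finset.mul_sum]
    congr 1; funext u
    simp only [hg, hh]
    have : Real.sqrt (f (u, v)) * Real.sqrt (f (u, v)) = f (u, v) :=
      Real.mul_self_sqrt (hf (u, v))
    linear_combination (-(x v * (Real.sqrt (rv v))⁻¹ * (Real.sqrt (cv u))⁻¹ * y u)) * this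
  rw [hform]
  -- Cauchy–Schwarz
  have key := Finset.sum_mul_sq_le_sq_mul_sq Finset.univ g h
  have hgsum : ∑ p : C × R, g p ^ 2 ≤ η * ∑ v : R, x v ^ 2 := by
    have : ∑ p : C × R, g p ^ 2 = ∑ v : R, x v ^ 2 * (a v ^ 2 * ∑ u : C, f (u, v)) := by
      rw [Fintype.sum_prod_type, Finset.sum_comm]
      refine Finset.sum_congr rfl fun v _ => ?_
      rw [Finset.mul_sum, Finset.mul_sum]
      refine Finset.sum_congr rfl fun u _ => ?_
      simp only [hg]
      rw [mul_pow, mul_pow, Real.sq_sqrt (hf (u, v))]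
      ring
    rw [this, Finset.mul_sum]
    refine Finset.sum_le_sum fun v _ => ?_
    rw [mul_comm η (x v ^ 2)]
    exact mul_le_mul_of_nonneg_left (hav v) (sq_nonneg _)
  have hhsum : ∑ p : C × R, h p ^ 2 ≤ η * ∑ u : C, y u ^ 2 := by
    have : ∑ p : C × R, h p ^ 2 = ∑ u : C, y u ^ 2 * (b u ^ 2 * ∑ v : R, f (u, v)) := by
      rw [Fintype.sum_prod_type]
      refine Finset.sum_congr rfl fun u _ => ?_
      rw [Finset.mul_sum, Finset.mul_sum]
      refine Finset.sum_congr rfl fun v _ => ?_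
      simp only [hh]
      rw [mul_pow, mul_pow, Real.sq_sqrt (hf (u, v))]
      ring
    rw [this, Finset.mul_sum]
    refine Finset.sum_le_sum fun u _ => ?_
    rw [mul_comm η (y u ^ 2)]
    exact mul_le_mul_of_nonneg_left (hbu u) (sq_nonneg _)
  have hxnn : (0:ℝ) ≤ ∑ v : R, x v ^ 2 := Finset.sum_nonneg fun _ _ => sq_nonneg _
  have hynn : (0:ℝ) ≤ ∑ u : C, y u ^ 2 := Finset.sum_nonneg fun _ _ => sq_nonneg _
  have hgnn : (0:ℝ) ≤ ∑ p : C × R, g p ^ 2 := Finset.sum_nonneg fun _ _ => sq_nonneg _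
  have hhnn : (0:ℝ) ≤ ∑ p : C × R, h p ^ 2 := Finset.sum_nonneg fun _ _ => sq_nonneg _
  calc |∑ p : C × R, g p * h p|
      = Real.sqrt ((∑ p : C × R, g p * h p) ^ 2) := (Real.sqrt_sq_eq_abs _).symm
    _ ≤ Real.sqrt ((∑ p : C × R, g p ^ 2) * ∑ p : C × R, h p ^ 2) :=
        Real.sqrt_le_sqrt key
    _ ≤ Real.sqrt ((η * ∑ v : R, x v ^ 2) * (η * ∑ u : C, y u ^ 2)) := by
        apply Real.sqrt_le_sqrt
        exact mul_le_mul hgsum hhsum hhnn (by positivity)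
    _ = η * Real.sqrt (∑ v : R, x v ^ 2) * Real.sqrt (∑ u : C, y u ^ 2) := by
        rw [show (η * ∑ v : R, x v ^ 2) * (η * ∑ u : C, y u ^ 2)
            = (η * Real.sqrt (∑ v : R, x v ^ 2) * Real.sqrt (∑ u : C, y u ^ 2)) ^ 2 by
          rw [mul_pow, mul_pow, Real.sq_sqrt hxnn, Real.sq_sqrt hynn]; ring]
        exact Real.sqrt_sq (by positivity)


end
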